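/- The Arf pattern x₁+x₂−x₃ induces every strongly admissible pattern; that is, if a numerical semigroup S admits the Arf pattern, then S admits every pattern p with ad(p) ≥ 2. -/

import Mathlib

/-- A numerical semigroup: an additive submonoid of ℕ with finite complement. -/
def IsNumericalSemigroup (S : Set ℕ) : Prop :=
  0 ∈ S ∧ (∀ a ∈ S, ∀ b ∈ S, a + b ∈ S) ∧ Sᶜ.Finite

/-- Evaluation of a pattern (list of coefficients a₁,…,aₙ) at s₁,…,sₙ. -/
def patEval (p : List ℤ) (s : ℕ → ℕ) : ℤ :=
  ∑ i ∈ Finset.range p.length, p.getD i 0 * (s i : ℤ)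

/-- `S` admits the pattern `p`: p(s₁,…,sₙ) ∈ S for all s₁ ≥ ⋯ ≥ sₙ in S. -/
def AdmitsPat (S : Set ℕ) (p : List ℤ) : Prop :=
  ∀ s : ℕ → ℕ, (∀ i, s i ∈ S) → (∀ i j, i ≤ j → s j ≤ s i) →
    ∃ m ∈ S, (m : ℤ) = patEval p s

/-- A pattern is admissible if it is admitted by some numerical semigroup. -/
def Admissible (p : List ℤ) : Prop :=
  ∃ S : Set ℕ, IsNumericalSemigroup S ∧ AdmitsPat S p

/-- The derivative p' of a pattern. -/
def pderiv : List ℤ → List ℤ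
  | [] => []
  | a :: q => if a = 1 then q else (a - 1) :: q

/-- The admissibility degree: least k such that p⁽ᵏ⁾ is not admissible, or ∞. -/
noncomputable def adDeg (p : List ℤ) : ℕ∞ :=
  sInf ((fun m : ℕ => (m : ℕ∞)) '' {m : ℕ | ¬ Admissible (pderiv^[m] p)})

/-- The partial sum bᵢ = a₁ + ⋯ + aᵢ of the coefficients of `p`. -/
def psum (p : List ℤ) (i : ℕ) : ℤ :=
  ∑ j ∈ Finset.range i, p.getD j 0

/-
Merging the first two coefficients, a·s₁ + b·s₂ + ⋯ = a·(s₁ − s₂) + ((a + b)·s₂ + ⋯), shortens a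
pattern and keeps its partial sums bᵢ positive. A semigroup admitting the Arf pattern contains
u + k·(x − y) whenever y ≤ x and y ≤ u lie in it, so by induction on the length the value of a
pattern with positive partial sums lies in S and is at least s₁. Finally ad(p) ≥ 2 makes p'
admissible, and the partial sums of p' are, up to a shift of index, those of p minus one; so
those of p are positive.
-/

lemma patEval_cons (a : ℤ) (q : List ℤ) (s : ℕ → ℕ) :
    patEval (a :: q) s = a * s 0 + patEval q (fun i => s (i + 1)) := by
  simp only [patEval, List.length_cons, Finset.sum_range_succ', List.getD_cons_succ,
    List.getD_cons_zero]
  ring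

lemma psum_cons_succ (a : ℤ) (q : List ℤ) (i : ℕ) :
    psum (a :: q) (i + 1) = a + psum q i := by
  simp only [psum, Finset.sum_range_succ', List.getD_cons_succ, List.getD_cons_zero]
  ring

lemma patEval_arf (s : ℕ → ℕ) : patEval [1, 1, -1] s = s 0 + s 1 - s 2 := by
  simp [patEval, Finset.sum_range_succ, sub_eq_add_neg]

section Arf

variable {S : Set ℕ}

lemma AdmitsPat.add_sub_mem_of_arf (hArf : AdmitsPat S [1, 1, -1]) {u x y : ℕ}
    (hu : u ∈ S) (hx : x ∈ S) (hy : y ∈ S) (hyu : y ≤ u) (hyx : y ≤ x) :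
    u + x - y ∈ S := by
  obtain ⟨m, hmS, hm⟩ := hArf (fun i => if i = 0 then max u x else if i = 1 then min u x else y)
    (by intro i; split_ifs <;> grind)
    (by intro i j hij; split_ifs <;> omega)
  rw [patEval_arf] at hm
  simp only [if_pos, Nat.one_ne_zero, OfNat.ofNat_ne_zero, OfNat.ofNat_ne_one, if_false] at hm
  have hm' : m = u + x - y := by omega
  rwa [← hm']

lemma AdmitsPat.add_mul_sub_mem_of_arf (hArf : AdmitsPat S [1, 1, -1]) {u x y : ℕ}
    (hu : u ∈ S) (hx : x ∈ S) (hy : y ∈ S) (hyu : y ≤ u) (hyx : y ≤ x) (k : ℕ) :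
    u + k * (x - y) ∈ S := by
  induction k with
  | zero => simpa using hu
  | succ k ih =>
    have := hArf.add_sub_mem_of_arf ih hx hy (hyu.trans (Nat.le_add_right _ _)) hyx
    convert this using 1
    rw [Nat.succ_mul]
    omega

lemma AdmitsPat.exists_mem_eq_patEval_cons_of_arf (h0 : 0 ∈ S)
    (hArf : AdmitsPat S [1, 1, -1]) (a : ℤ) (q : List ℤ) (s : ℕ → ℕ) (hsS : ∀ i, s i ∈ S)
    (hs : Antitone s) (hpos : ∀ i, 0 < i → i ≤ q.length + 1 → 0 < psum (a :: q) i) :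
    ∃ m ∈ S, (m : ℤ) = patEval (a :: q) s ∧ s 0 ≤ m := by
  induction q generalizing a s with
  | nil =>
    have ha : 0 < a := by simpa [psum] using hpos 1 one_pos le_rfl
    refine ⟨s 0 + (a.toNat - 1) * (s 0 - 0), hArf.add_mul_sub_mem_of_arf (hsS 0) (hsS 0) h0
      (Nat.zero_le _) (Nat.zero_le _) _, ?_, Nat.le_add_right _ _⟩
    simp only [patEval, List.length_singleton, Finset.sum_range_one, List.getD_cons_zero]
    push_cast [Nat.sub_zero, Nat.cast_sub (show 1 ≤ a.toNat by omega), Int.toNat_of_nonneg ha.le]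
    ring
  | cons b q ih =>
    have ha : 0 < a := by simpa [psum] using hpos 1 one_pos (by simp)
    obtain ⟨u, huS, hu, hsu⟩ := ih (a + b) (fun i => s (i + 1)) (fun i => hsS _)
      (fun i j hij => hs (by omega)) fun i hi hil => by
        obtain ⟨j, rfl⟩ : ∃ j, i = j + 1 := ⟨i - 1, by omega⟩
        simpa [psum_cons_succ, add_assoc] using hpos (j + 2) (by omega) (by simpa using hil)
    simp only [zero_add] at hu hsu
    have hs01 : s 1 ≤ s 0 := hs zero_le_one
    have hdiff : s 0 - s 1 ≤ a.toNat * (s 0 - s 1) := Nat.le_mul_of_pos_left _ (by omega)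
    refine ⟨u + a.toNat * (s 0 - s 1), hArf.add_mul_sub_mem_of_arf huS (hsS 0) (hsS 1) hsu hs01 _,
      ?_, by omega⟩
    rw [patEval_cons] at hu
    rw [patEval_cons, patEval_cons]
    push_cast [Nat.cast_sub hs01, Int.toNat_of_nonneg ha.le]
    linear_combination hu

theorem AdmitsPat.of_arf_of_psum_pos (h0 : 0 ∈ S) (hArf : AdmitsPat S [1, 1, -1])
    {p : List ℤ} (hp : ∀ i, 0 < i → i ≤ p.length → 0 < psum p i) : AdmitsPat S p := by
  intro s hsS hs
  cases p with
  | nil => exact ⟨0, h0, by simp [patEval]⟩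
  | cons a q =>
    obtain ⟨m, hmS, hm, -⟩ := hArf.exists_mem_eq_patEval_cons_of_arf h0 a q s hsS hs hp
    exact ⟨m, hmS, hm⟩

end Arf

lemma patEval_indicator_lt (p : List ℤ) {i : ℕ} (hi : i ≤ p.length) (M : ℕ) :
    patEval p (fun j => if j < i then M else 0) = psum p i * M := by
  rw [patEval, psum, Finset.sum_mul, ← Finset.sum_range_add_sum_Ico _ hi,
    Finset.sum_eq_zero (s := Finset.Ico i p.length) fun j hj => by
      simp [(Finset.mem_Ico.mp hj).1.not_gt]]
  refine (add_zero _).trans (Finset.sum_congr rfl fun j hj => ?_)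
  simp [Finset.mem_range.mp hj]

lemma Admissible.psum_nonneg {p : List ℤ} (hp : Admissible p) {i : ℕ} (hi : i ≤ p.length) :
    0 ≤ psum p i := by
  obtain ⟨S, ⟨h0, -, hfin⟩, hS⟩ := hp
  obtain ⟨M, hMS, hMpos⟩ := (Set.infinite_of_finite_compl hfin).exists_gt 0
  obtain ⟨m, -, hm⟩ := hS (fun j => if j < i then M else 0)
    (fun j => by split_ifs <;> assumption) (fun j k hjk => by split_ifs <;> omega)
  rw [patEval_indicator_lt p hi] at hm
  by_contra! hneg
  nlinarith [(Int.natCast_pos.mpr hMpos)]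

lemma psum_pos_of_admissible_pderiv {p : List ℤ} (hp : Admissible (pderiv p))
    {i : ℕ} (hi0 : 0 < i) (hi : i ≤ p.length) : 0 < psum p i := by
  cases p with
  | nil => simp only [List.length_nil] at hi; omega
  | cons a q =>
    obtain ⟨j, rfl⟩ : ∃ j, i = j + 1 := ⟨i - 1, by omega⟩
    rw [psum_cons_succ]
    simp only [List.length_cons, Nat.add_le_add_iff_right] at hi
    by_cases ha : a = 1
    · simp only [pderiv, ha, if_true] at hp
      have hq := hp.psum_nonneg hi
      omega
    · simp only [pderiv, ha, if_false] at hp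
      have hq := hp.psum_nonneg (i := j + 1) (by simpa using hi)
      rw [psum_cons_succ] at hq
      omega

lemma admissible_iterate_pderiv_of_lt_adDeg {p : List ℤ} {k : ℕ} (hk : (k : ℕ∞) < adDeg p) :
    Admissible (pderiv^[k] p) := by
  by_contra h
  exact (sInf_le ⟨k, h, rfl⟩ : adDeg p ≤ k).not_gt hk

theorem stmt_12_general (S : Set ℕ) (hS : IsNumericalSemigroup S)
    (hArf : AdmitsPat S [1, 1, -1])
    (p : List ℤ) (hdeg : 2 ≤ adDeg p) :
    AdmitsPat S p := by
  have hp' : Admissible (pderiv p) :=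
    admissible_iterate_pderiv_of_lt_adDeg (k := 1) (lt_of_lt_of_le (by norm_num) hdeg)
  exact hArf.of_arf_of_psum_pos hS.1 fun i hi0 hi => psum_pos_of_admissible_pderiv hp' hi0 hi

/-- The Arf pattern induces every strongly admissible pattern: if S admits
x₁ + x₂ − x₃ then S admits every pattern p with ad(p) ≥ 2. -/
theorem stmt_12 (S : Set ℕ) (hS : IsNumericalSemigroup S)
    (hArf : AdmitsPat S [1, 1, -1])
    (p : List ℤ) (hp : ∀ a ∈ p, a ≠ 0) (hdeg : 2 ≤ adDeg p) :
    AdmitsPat S p :=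
  stmt_12_general S hS hArf p hdeg
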